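/- Let A_G = [[1/4, 1/4 − √3/6], [1/4 + √3/6, 1/4]], b_G = (1/2, 1/2), c_G = (1/2 − √3/6, 1/2 + √3/6) be the Gauss–Legendre order-4 tableau, and let Φ have coefficient matrix A1 = [[1/2, 1/2 − √3/3], [1/2 + √3/3, 1/2]], abscissae c1 = (1 − √3/3, 1 + √3/3), weights b1 = (1/2 + √3/4, 1/2 − √3/4), and Ψ have coefficient matrix A2 = [[−√3/4, −√3/12], [√3/12, √3/4]], abscissae c2 = (−√3/3, √3/3), weights b2 = (1/2 − √3/4, 1/2 + √3/4). Then: (i) (1/2)·A1 = A_G; (ii) (1/2)·c1 = c_G and (1/2) + (1/2)·c2_i = (c_G)_i for i = 1,2; (iii) (1/2)·(b1)_j + (1/2)·(A2)_{ij} = (A_G)_{ij} for all i, j ∈ {1,2}; (iv) (1/2)·((b1)_j + (b2)_j) = (b_G)_j for j = 1,2. -/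
import Mathlib

/-- Coefficient matrix of the 2-stage Gauss–Legendre method of order 4. -/
noncomputable def gaussA : Fin 2 → Fin 2 → ℝ :=
  ![![1/4, 1/4 - Real.sqrt 3/6], ![1/4 + Real.sqrt 3/6, 1/4]]

/-- Abscissae of the 2-stage Gauss–Legendre method of order 4. -/
noncomputable def gaussC : Fin 2 → ℝ :=
  ![1/2 - Real.sqrt 3/6, 1/2 + Real.sqrt 3/6]

/-- Weights of the 2-stage Gauss–Legendre method of order 4. -/
noncomputable def gaussB : Fin 2 → ℝ := ![1/2, 1/2]

/-- Coefficient matrix of the method Φ. -/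
noncomputable def phiA : Fin 2 → Fin 2 → ℝ :=
  ![![1/2, 1/2 - Real.sqrt 3/3], ![1/2 + Real.sqrt 3/3, 1/2]]

/-- Abscissae of the method Φ. -/
noncomputable def phiC : Fin 2 → ℝ := ![1 - Real.sqrt 3/3, 1 + Real.sqrt 3/3]

/-- Weights of the method Φ. -/
noncomputable def phiB : Fin 2 → ℝ := ![1/2 + Real.sqrt 3/4, 1/2 - Real.sqrt 3/4]

/-- Coefficient matrix of the method Ψ. -/
noncomputable def psiA : Fin 2 → Fin 2 → ℝ :=
  ![![-Real.sqrt 3/4, -Real.sqrt 3/12], ![Real.sqrt 3/12, Real.sqrt 3/4]]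

/-- Abscissae of the method Ψ. -/
noncomputable def psiC : Fin 2 → ℝ := ![-Real.sqrt 3/3, Real.sqrt 3/3]

/-- Weights of the method Ψ. -/
noncomputable def psiB : Fin 2 → ℝ := ![1/2 - Real.sqrt 3/4, 1/2 + Real.sqrt 3/4]

theorem stmt2 :
    (∀ i j : Fin 2, (1/2 : ℝ) * phiA i j = gaussA i j) ∧
    (∀ i : Fin 2, (1/2 : ℝ) * phiC i = gaussC i) ∧
    (∀ i : Fin 2, (1/2 : ℝ) + (1/2 : ℝ) * psiC i = gaussC i) ∧
    (∀ i j : Fin 2, (1/2 : ℝ) * phiB j + (1/2 : ℝ) * psiA i j = gaussA i j) ∧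
    (∀ j : Fin 2, (1/2 : ℝ) * (phiB j + psiB j) = gaussB j) := by
  refine ⟨?_, ?_, ?_, ?_, ?_⟩ <;>
    intro i <;>
    first
      | (intro j; fin_cases i <;> fin_cases j <;>
          simp [phiA, gaussA, phiB, psiA] <;> ring)
      | (fin_cases i <;>
          simp [phiC, gaussC, psiC, phiB, psiB, gaussB] <;> ring)
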